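/- The product of two almost-Riordan arrays (a,g,f)·(b,u,v) = ((a,g,f)·b, g·u(f), v(f)) is again an almost-Riordan array; i.e. the first component has constant term 1, the second component has constant term 1, and the third has v(f)(0)=0 with linear coefficient 1. -/

import Mathlib

open PowerSeries Finset

/-- Shift: `shift h = (h - h₀)/x`, i.e. the series with coefficients `h₁, h₂, …`. -/
noncomputable def shift (h : PowerSeries ℤ) : PowerSeries ℤ :=
  PowerSeries.mk fun n => coeff (R := ℤ) (n + 1) h

/-- Composition `h ∘ f` of formal power series (intended for `f` with zero constant term,
in which case `coeff n (f ^ k) = 0` for `k > n`). -/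
noncomputable def comp (h f : PowerSeries ℤ) : PowerSeries ℤ :=
  PowerSeries.mk fun n => ∑ k ∈ Finset.range (n + 1), coeff (R := ℤ) k h * coeff (R := ℤ) n (f ^ k)

/-- Action of an almost-Riordan array `(a,g,f)` on a power series `b`:
`(a,g,f)·b = b₀ a + x g b̃(f)` where `b̃ = (b - b₀)/x`. -/
noncomputable def act (a g f b : PowerSeries ℤ) : PowerSeries ℤ :=
  C (R := ℤ) (coeff (R := ℤ) 0 b) * a + X * g * comp (shift b) f

/-- Product of almost-Riordan arrays: `(a,g,f)·(b,u,v) = ((a,g,f)·b, g·u(f), v(f))`. -/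
noncomputable def arMul (t s : PowerSeries ℤ × PowerSeries ℤ × PowerSeries ℤ) :
    PowerSeries ℤ × PowerSeries ℤ × PowerSeries ℤ :=
  (act t.1 t.2.1 t.2.2 s.1, t.2.1 * comp s.2.1 t.2.2, comp s.2.2 t.2.2)

/-- `(a,g,f)` is an almost-Riordan array: `a₀ = 1`, `g₀ = 1`, `f₀ = 0`, `f₁ = 1`. -/
def isAR (t : PowerSeries ℤ × PowerSeries ℤ × PowerSeries ℤ) : Prop :=
  coeff (R := ℤ) 0 t.1 = 1 ∧ coeff (R := ℤ) 0 t.2.1 = 1 ∧ coeff (R := ℤ) 0 t.2.2 = 0 ∧ coeff (R := ℤ) 1 t.2.2 = 1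

theorem coeff_zero_comp (h f : PowerSeries ℤ) : coeff 0 (comp h f) = coeff 0 h := by
  simp [comp]

theorem coeff_one_comp (h f : PowerSeries ℤ) : coeff 1 (comp h f) = coeff 1 h * coeff 1 f := by
  simp [comp, Finset.sum_range_succ]

theorem coeff_zero_act (a g f b : PowerSeries ℤ) :
    coeff 0 (act a g f b) = coeff 0 b * coeff 0 a := by
  simp [act, mul_assoc]

/-- the product of two almost-Riordan arrays is an almost-Riordan array. -/
theorem statement3 (a g f b u v : PowerSeries ℤ)
    (ht : isAR (a, g, f)) (hs : isAR (b, u, v)) :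
    isAR (arMul (a, g, f) (b, u, v)) := by
  obtain ⟨ha, hg, -, hf1⟩ := ht
  obtain ⟨hb, hu, hv0, hv1⟩ := hs
  refine ⟨?_, ?_, ?_, ?_⟩
  · simp only [arMul, coeff_zero_act, ha, hb, mul_one]
  · rw [arMul, coeff_zero_eq_constantCoeff_apply, map_mul]
    simp only [← coeff_zero_eq_constantCoeff_apply, coeff_zero_comp, hg, hu, mul_one]
  · simp only [arMul, coeff_zero_comp, hv0]
  · simp only [arMul, coeff_one_comp, hv1, hf1, mul_one]
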